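/- Let H be a complex Hilbert space, Ω nonempty, k : Ω → H unit vectors, A, B bounded operators with B invertible, r > 0, with ‖(A−B) k(λ)‖ ≤ r for all λ ∈ Ω, and suppose 1/√(r²+1) ≤ ‖B⁻¹‖ < 1/r. Then (sup_λ ‖A k(λ)‖)² ≤ (sup_λ |⟨B* A k(λ), k(λ)⟩|)² + 2 (sup_λ |⟨B* A k(λ), k(λ)⟩|) · (‖B⁻¹‖ − √(1 − r²‖B⁻¹‖²)) / ‖B⁻¹‖. -/

import Mathlib

/-!
Expanding `‖(A - B) x‖²` gives `‖A x‖² ≤ 2 |⟪B* A x, x⟫| + r² - ‖B x‖²`, and `‖B x‖ ≥ 1 / ‖B⁻¹‖`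
for a unit vector `x`. With `d = √(1 - r² ‖B⁻¹‖²) / ‖B⁻¹‖`, so that `d² = 1 / ‖B⁻¹‖² - r²`, this
reads `‖A x‖² ≤ 2 b - d² ≤ 2 S - d²`, where `S` is the supremum of the `b = |⟪B* A x, x⟫|`;
finally `2 S - d² ≤ S² + 2 S (1 - d)` because `(S - d)² ≥ 0`.
-/

open scoped InnerProductSpace

section InnerProduct

variable {𝕜 E : Type*} [RCLike 𝕜] [NormedAddCommGroup E] [InnerProductSpace 𝕜 E]

theorem norm_sq_le_two_mul_norm_inner_add_sq_sub_sq {u v : E} {r : ℝ} (h : ‖u - v‖ ≤ r) :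
    ‖u‖ ^ 2 ≤ 2 * ‖⟪u, v⟫_𝕜‖ + r ^ 2 - ‖v‖ ^ 2 := by
  have hsub : ‖u - v‖ ^ 2 ≤ r ^ 2 := pow_le_pow_left₀ (norm_nonneg _) h 2
  linarith [norm_sub_sq (𝕜 := 𝕜) u v, RCLike.re_le_norm ⟪u, v⟫_𝕜]

theorem norm_inner_apply_le_opNorm (T : E →L[𝕜] E) {x : E} (hx : ‖x‖ = 1) :
    ‖⟪T x, x⟫_𝕜‖ ≤ ‖T‖ := by
  simpa [hx] using (norm_inner_le_norm (T x) x).trans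
    (mul_le_mul_of_nonneg_right (T.le_opNorm x) (norm_nonneg x))

end InnerProduct

theorem ContinuousLinearMap.norm_le_opNorm_mul_norm_apply_of_comp_eq_id {𝕜 E F : Type*}
    [NontriviallyNormedField 𝕜] [NormedAddCommGroup E] [NormedSpace 𝕜 E] [NormedAddCommGroup F]
    [NormedSpace 𝕜 F] {B : E →L[𝕜] F} {C : F →L[𝕜] E} (h : C.comp B = .id 𝕜 E) (x : E) :
    ‖x‖ ≤ ‖C‖ * ‖B x‖ := by
  simpa [← ContinuousLinearMap.comp_apply, h] using C.le_opNorm (B x)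

theorem sq_iSup_le {ι : Type*} [Nonempty ι] {f : ι → ℝ} {a : ℝ} (hf : ∀ i, 0 ≤ f i)
    (h : ∀ i, f i ^ 2 ≤ a) : (⨆ i, f i) ^ 2 ≤ a := by
  have ha : 0 ≤ a := (pow_nonneg (hf (Classical.arbitrary ι)) 2).trans (h _)
  calc (⨆ i, f i) ^ 2 ≤ √a ^ 2 :=
        pow_le_pow_left₀ (Real.iSup_nonneg hf)
          (ciSup_le fun i => (le_abs_self _).trans (Real.abs_le_sqrt (h i))) 2
    _ = a := Real.sq_sqrt ha

open ContinuousLinearMap in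
theorem stmt_6_general {H : Type*} [NormedAddCommGroup H] [InnerProductSpace ℂ H] [CompleteSpace H]
    {Ω : Type*} [Nonempty Ω] (k : Ω → H) (hk : ∀ l, ‖k l‖ = 1)
    (A B Binv : H →L[ℂ] H)
    (hB2 : Binv.comp B = ContinuousLinearMap.id ℂ H)
    (r : ℝ) (hr : 0 < r) (h : ∀ l, ‖(A - B) (k l)‖ ≤ r)
    (h2 : ‖Binv‖ < 1 / r) :
    (⨆ l, ‖A (k l)‖) ^ 2 ≤
      (⨆ l, ‖(inner ℂ ((adjoint B) (A (k l))) (k l) : ℂ)‖) ^ 2 +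
        2 * (⨆ l, ‖(inner ℂ ((adjoint B) (A (k l))) (k l) : ℂ)‖) *
          ((‖Binv‖ - Real.sqrt (1 - r ^ 2 * ‖Binv‖ ^ 2)) / ‖Binv‖) := by
  obtain ⟨l₀⟩ := ‹Nonempty Ω›
  set N := ‖Binv‖
  set b : Ω → ℝ := fun l => ‖(inner ℂ ((adjoint B) (A (k l))) (k l) : ℂ)‖
  set S := ⨆ l, b l
  have hBk (l : Ω) : 1 ≤ N * ‖B (k l)‖ :=
    hk l ▸ norm_le_opNorm_mul_norm_apply_of_comp_eq_id hB2 (k l)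
  have hN : 0 < N := pos_of_mul_pos_left (one_pos.trans_le (hBk l₀)) (norm_nonneg _)
  have hrN : r ^ 2 * N ^ 2 ≤ 1 := by
    have : N * r < 1 := (lt_div_iff₀ hr).1 h2
    nlinarith [mul_pos hN hr]
  set d := √(1 - r ^ 2 * N ^ 2) / N
  have hd : d ^ 2 = 1 / N ^ 2 - r ^ 2 := by
    rw [div_pow, Real.sq_sqrt (by linarith)]
    field_simp
  have hbS (l : Ω) : b l ≤ S :=
    le_ciSup ⟨_, Set.forall_mem_range.2 fun l =>
      norm_inner_apply_le_opNorm ((adjoint B).comp A) (hk l)⟩ l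
  have key (l : Ω) : ‖A (k l)‖ ^ 2 ≤ 2 * b l - d ^ 2 := by
    have hinner : ‖A (k l)‖ ^ 2 ≤ 2 * b l + r ^ 2 - ‖B (k l)‖ ^ 2 := by
      simp only [b, adjoint_inner_left]
      exact norm_sq_le_two_mul_norm_inner_add_sq_sub_sq (by simpa using h l)
    have hBk_sq : 1 / N ^ 2 ≤ ‖B (k l)‖ ^ 2 := by
      rw [div_le_iff₀' (by positivity), ← mul_pow]
      exact one_le_pow₀ (hBk l)
    linarith
  rw [sub_div, div_self hN.ne']
  exact sq_iSup_le (fun l => norm_nonneg _) fun l => by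
    nlinarith [key l, hbS l, sq_nonneg (S - d)]

open ContinuousLinearMap in
theorem stmt_6 {H : Type*} [NormedAddCommGroup H] [InnerProductSpace ℂ H] [CompleteSpace H]
    {Ω : Type*} [Nonempty Ω] (k : Ω → H) (hk : ∀ l, ‖k l‖ = 1)
    (A B Binv : H →L[ℂ] H)
    (hB1 : B.comp Binv = ContinuousLinearMap.id ℂ H)
    (hB2 : Binv.comp B = ContinuousLinearMap.id ℂ H)
    (r : ℝ) (hr : 0 < r) (h : ∀ l, ‖(A - B) (k l)‖ ≤ r)
    (h1 : 1 / Real.sqrt (r ^ 2 + 1) ≤ ‖Binv‖) (h2 : ‖Binv‖ < 1 / r) :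
    (⨆ l, ‖A (k l)‖) ^ 2 ≤
      (⨆ l, ‖(inner ℂ ((adjoint B) (A (k l))) (k l) : ℂ)‖) ^ 2 +
        2 * (⨆ l, ‖(inner ℂ ((adjoint B) (A (k l))) (k l) : ℂ)‖) *
          ((‖Binv‖ - Real.sqrt (1 - r ^ 2 * ‖Binv‖ ^ 2)) / ‖Binv‖) :=
  stmt_6_general k hk A B Binv hB2 r hr h h2
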